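/- arXiv:1907.06006 — 6 statements merged into one kernel-verified Lean document; each statement's English description precedes it below -/
import Mathlib

section
/- For the two-parameter Pareto distribution, the Fisher–Rao metric components at a parameter point (α, β) with α > 0, β > 0 are g₁₁ = β²/α², g₁₂ = g₂₁ = 0, g₂₂ = 1/β². Precisely, with ∂_α ℓ(x) = β/α and ∂_β ℓ(x) = 1/β + log α − log x being the partial derivatives of the log-likelihood ℓ(x) = log p(x | α, β): (i) ∫_α^∞ (β/α)² · β α^β x^{−(β+1)} dx = β²/α²; (ii) ∫_α^∞ (β/α)·(1/β + log α − log x) · β α^β x^{−(β+1)} dx = 0; (iii) ∫_α^∞ (1/β + log α − log x)² · β α^β x^{−(β+1)} dx = 1/β². -/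
open MeasureTheory Real Filter Set

lemma aux_tendsto (β c : ℝ) (hβ : 0 < β) (j : ℕ) :
    Tendsto (fun x : ℝ => x ^ (-β) * (Real.log x - c) ^ j) atTop (nhds 0) := by
  have h1 : Tendsto (fun t : ℝ => t ^ j * Real.exp (-β * t)) atTop (nhds 0) := by
    simpa [Real.rpow_natCast] using tendsto_rpow_mul_exp_neg_mul_atTop_nhds_zero j β hβ
  have h3 : Tendsto (fun t : ℝ => t - c) atTop atTop :=
    tendsto_atTop_add_const_right _ (-c) tendsto_id
  have h2 : Tendsto (fun t : ℝ => Real.exp (-β * t) * (t - c) ^ j) atTop (nhds 0) := by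
    have h4 := (h1.comp h3).mul_const (Real.exp (-β * c))
    rw [zero_mul] at h4
    refine h4.congr fun t => ?_
    simp only [Function.comp]
    rw [show -β * t = -β * (t - c) + -β * c by ring, Real.exp_add]
    ring
  have h5 := h2.comp Real.tendsto_log_atTop
  refine h5.congr' ?_
  filter_upwards [eventually_gt_atTop (0:ℝ)] with x hx
  simp only [Function.comp]
  rw [Real.rpow_def_of_pos hx]
  ring_nf

lemma key0 (α β : ℝ) (hα : 0 < α) (hβ : 0 < β) :
    IntegrableOn (fun x : ℝ => (Real.log x - Real.log α) ^ (0:ℕ) * x ^ (-(β+1))) (Ioi α) ∧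
    (∫ x in Ioi α, (Real.log x - Real.log α) ^ (0:ℕ) * x ^ (-(β+1))) = α ^ (-β) / β := by
  set g : ℝ → ℝ := fun x => -(x ^ (-β) / β) with hg
  have hderiv : ∀ x ∈ Ici α, HasDerivAt g
      ((Real.log x - Real.log α) ^ (0:ℕ) * x ^ (-(β+1))) x := by
    intro x hx
    have hx0 : 0 < x := lt_of_lt_of_le hα hx
    have h1 : HasDerivAt (fun y : ℝ => y ^ (-β)) (-β * x ^ (-β - 1)) x :=
      Real.hasDerivAt_rpow_const (Or.inl hx0.ne')
    have h2 := (h1.div_const β).fun_neg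
    refine h2.congr_deriv ?_
    rw [show -(β+1) = -β - 1 by ring]
    field_simp
  have hpos : ∀ x ∈ Ioi α, 0 ≤ (Real.log x - Real.log α) ^ (0:ℕ) * x ^ (-(β+1)) := by
    intro x hx
    have hx0 : (0:ℝ) < x := lt_trans hα hx
    refine mul_nonneg (by simp) (Real.rpow_nonneg hx0.le _)
  have htend : Tendsto g atTop (nhds 0) := by
    have := ((aux_tendsto β (Real.log α) hβ 0).div_const β).neg
    simpa using this
  refine ⟨integrableOn_Ioi_deriv_of_nonneg' hderiv hpos htend, ?_⟩
  rw [integral_Ioi_of_hasDerivAt_of_nonneg' hderiv hpos htend]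
  simp [hg]

lemma key1 (α β : ℝ) (hα : 0 < α) (hβ : 0 < β) :
    IntegrableOn (fun x : ℝ => (Real.log x - Real.log α) ^ (1:ℕ) * x ^ (-(β+1))) (Ioi α) ∧
    (∫ x in Ioi α, (Real.log x - Real.log α) ^ (1:ℕ) * x ^ (-(β+1))) = α ^ (-β) / β ^ 2 := by
  set g : ℝ → ℝ := fun x =>
    -(x ^ (-β) * ((Real.log x - Real.log α) / β + 1 / β ^ 2)) with hg
  have hderiv : ∀ x ∈ Ici α, HasDerivAt g
      ((Real.log x - Real.log α) ^ (1:ℕ) * x ^ (-(β+1))) x := by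
    intro x hx
    have hx0 : 0 < x := lt_of_lt_of_le hα hx
    have h1 : HasDerivAt (fun y : ℝ => y ^ (-β)) (-β * x ^ (-β - 1)) x :=
      Real.hasDerivAt_rpow_const (Or.inl hx0.ne')
    have h2 : HasDerivAt (fun y : ℝ => (Real.log y - Real.log α) / β + 1 / β ^ 2)
        (x⁻¹ / β) x := (((Real.hasDerivAt_log hx0.ne').sub_const _).div_const β).add_const _
    have h3 := (h1.fun_mul h2).fun_neg
    refine h3.congr_deriv ?_
    have e1 : x ^ (-β) * x⁻¹ = x ^ (-β - 1) := by
      rw [Real.rpow_sub_one hx0.ne']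
      ring
    have e2 : x ^ (-(β+1)) = x ^ (-β - 1) := by ring_nf
    rw [e2, ← e1]
    field_simp [e1.symm]
    ring
  have hpos : ∀ x ∈ Ioi α, 0 ≤ (Real.log x - Real.log α) ^ (1:ℕ) * x ^ (-(β+1)) := by
    intro x hx
    have : Real.log α ≤ Real.log x := Real.log_le_log hα (le_of_lt hx)
    have h2 : (0:ℝ) ≤ Real.log x - Real.log α := by linarith
    have hx0 : (0:ℝ) < x := lt_trans hα hx
    exact mul_nonneg (by simpa using h2) (Real.rpow_nonneg hx0.le _)
  have htend : Tendsto g atTop (nhds 0) := by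
    have h0 := ((aux_tendsto β (Real.log α) hβ 1).div_const β).add
      ((aux_tendsto β (Real.log α) hβ 0).div_const (β ^ 2))
    norm_num at h0
    have := h0.neg
    rw [neg_zero] at this
    refine this.congr fun x => ?_
    simp [hg]
    ring
  refine ⟨integrableOn_Ioi_deriv_of_nonneg' hderiv hpos htend, ?_⟩
  rw [integral_Ioi_of_hasDerivAt_of_nonneg' hderiv hpos htend]
  simp [hg]
  ring

lemma key2 (α β : ℝ) (hα : 0 < α) (hβ : 0 < β) :
    IntegrableOn (fun x : ℝ => (Real.log x - Real.log α) ^ (2:ℕ) * x ^ (-(β+1))) (Ioi α) ∧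
    (∫ x in Ioi α, (Real.log x - Real.log α) ^ (2:ℕ) * x ^ (-(β+1))) = 2 * α ^ (-β) / β ^ 3 := by
  set g : ℝ → ℝ := fun x =>
    -(x ^ (-β) * ((Real.log x - Real.log α) ^ 2 / β
      + 2 * (Real.log x - Real.log α) / β ^ 2 + 2 / β ^ 3)) with hg
  have hderiv : ∀ x ∈ Ici α, HasDerivAt g
      ((Real.log x - Real.log α) ^ (2:ℕ) * x ^ (-(β+1))) x := by
    intro x hx
    have hx0 : 0 < x := lt_of_lt_of_le hα hx
    have h1 : HasDerivAt (fun y : ℝ => y ^ (-β)) (-β * x ^ (-β - 1)) x :=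
      Real.hasDerivAt_rpow_const (Or.inl hx0.ne')
    have hu : HasDerivAt (fun y : ℝ => Real.log y - Real.log α) x⁻¹ x :=
      (Real.hasDerivAt_log hx0.ne').sub_const _
    have h2 : HasDerivAt (fun y : ℝ => (Real.log y - Real.log α) ^ 2 / β
        + 2 * (Real.log y - Real.log α) / β ^ 2 + 2 / β ^ 3)
        ((2 * (Real.log x - Real.log α) * x⁻¹) / β + 2 * x⁻¹ / β ^ 2) x := by
      have hsq : HasDerivAt (fun y : ℝ => (Real.log y - Real.log α) ^ 2)
          (2 * (Real.log x - Real.log α) * x⁻¹) x := by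
        have := hu.fun_pow 2
        simpa using this
      exact (((hsq.div_const β).add ((hu.const_mul 2).div_const (β ^ 2))).add_const _)
    have h3 := (h1.fun_mul h2).fun_neg
    refine h3.congr_deriv ?_
    have e1 : x ^ (-β) * x⁻¹ = x ^ (-β - 1) := by
      rw [Real.rpow_sub_one hx0.ne']
      ring
    have e2 : x ^ (-(β+1)) = x ^ (-β - 1) := by ring_nf
    rw [e2, ← e1]
    field_simp [e1.symm]
    ring
  have hpos : ∀ x ∈ Ioi α, 0 ≤ (Real.log x - Real.log α) ^ (2:ℕ) * x ^ (-(β+1)) := by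
    intro x hx
    have hx0 : (0:ℝ) < x := lt_trans hα hx
    refine mul_nonneg (sq_nonneg _) (Real.rpow_nonneg hx0.le _)
  have htend : Tendsto g atTop (nhds 0) := by
    have h0 := (((aux_tendsto β (Real.log α) hβ 2).div_const β).add
      (((aux_tendsto β (Real.log α) hβ 1).const_mul 2).div_const (β ^ 2))).add
      (((aux_tendsto β (Real.log α) hβ 0).const_mul 2).div_const (β ^ 3))
    norm_num at h0
    have := h0.neg
    rw [neg_zero] at this
    refine this.congr fun x => ?_
    simp [hg]
    ring
  refine ⟨integrableOn_Ioi_deriv_of_nonneg' hderiv hpos htend, ?_⟩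
  rw [integral_Ioi_of_hasDerivAt_of_nonneg' hderiv hpos htend]
  simp [hg]
  ring

/-- Fisher–Rao metric components of the two-parameter Pareto distribution:
`g₁₁ = β²/α²`, `g₁₂ = g₂₁ = 0`, `g₂₂ = 1/β²`. -/
theorem pareto_fisher_rao_metric (α β : ℝ) (hα : 0 < α) (hβ : 0 < β) :
    (∫ x in Set.Ioi α, (β / α) ^ 2 * (β * α ^ β * x ^ (-(β + 1)))) = β ^ 2 / α ^ 2 ∧
    (∫ x in Set.Ioi α,
      (β / α) * (1 / β + Real.log α - Real.log x) * (β * α ^ β * x ^ (-(β + 1)))) = 0 ∧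
    (∫ x in Set.Ioi α,
      (1 / β + Real.log α - Real.log x) ^ 2 * (β * α ^ β * x ^ (-(β + 1)))) = 1 / β ^ 2 := by
  have k0 := key0 α β hα hβ
  have k1 := key1 α β hα hβ
  have k2 := key2 α β hα hβ
  have hA : α ^ (-β) = (α ^ β)⁻¹ := by
    rw [← Real.rpow_neg hα.le]
  have hA0 : α ^ β ≠ 0 := (Real.rpow_pos_of_pos hα β).ne'
  refine ⟨?_, ?_, ?_⟩
  · have e : ∀ x : ℝ, (β / α) ^ 2 * (β * α ^ β * x ^ (-(β + 1)))
        = ((β / α) ^ 2 * (β * α ^ β))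
          * ((Real.log x - Real.log α) ^ (0:ℕ) * x ^ (-(β + 1))) := by
      intro x; ring
    simp only [e]
    rw [MeasureTheory.integral_const_mul, k0.2, hA]
    field_simp
  · have e : ∀ x : ℝ, (β / α) * (1 / β + Real.log α - Real.log x) * (β * α ^ β * x ^ (-(β + 1)))
        = ((β / α) * (β * α ^ β) / β)
            * ((Real.log x - Real.log α) ^ (0:ℕ) * x ^ (-(β + 1)))
          + (-((β / α) * (β * α ^ β)))
            * ((Real.log x - Real.log α) ^ (1:ℕ) * x ^ (-(β + 1))) := by
      intro x; ring
    simp only [e]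
    rw [MeasureTheory.integral_add (k0.1.const_mul _) (k1.1.const_mul _),
      MeasureTheory.integral_const_mul, MeasureTheory.integral_const_mul, k0.2, k1.2, hA]
    field_simp
    ring
  · have e : ∀ x : ℝ, (1 / β + Real.log α - Real.log x) ^ 2 * (β * α ^ β * x ^ (-(β + 1)))
        = ((β * α ^ β) / β ^ 2)
            * ((Real.log x - Real.log α) ^ (0:ℕ) * x ^ (-(β + 1)))
          + ((-(2 * (β * α ^ β) / β))
            * ((Real.log x - Real.log α) ^ (1:ℕ) * x ^ (-(β + 1)))
          + (β * α ^ β)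
            * ((Real.log x - Real.log α) ^ (2:ℕ) * x ^ (-(β + 1)))) := by
      intro x; ring
    simp only [e]
    have i12 : IntegrableOn (fun x : ℝ =>
        (-(2 * (β * α ^ β) / β)) * ((Real.log x - Real.log α) ^ (1:ℕ) * x ^ (-(β + 1)))
        + (β * α ^ β) * ((Real.log x - Real.log α) ^ (2:ℕ) * x ^ (-(β + 1)))) (Ioi α) :=
      (k1.1.const_mul _).add (k2.1.const_mul _)
    rw [MeasureTheory.integral_add (k0.1.const_mul _) i12,
      MeasureTheory.integral_add (k1.1.const_mul _) (k2.1.const_mul _),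
      MeasureTheory.integral_const_mul, MeasureTheory.integral_const_mul,
      MeasureTheory.integral_const_mul, k0.2, k1.2, k2.2, hA]
    field_simp
    ring
end

section
/- Let α₀ > 0, β₀ > 0 and θ₀ ∈ ℝ. Define β(t) = β₀(e^t sin²(π/4 − θ₀/2) + e^{−t} cos²(π/4 − θ₀/2)) and α(t) = α₀ exp(sinh(t) cos(θ₀)/β(t)) for t ∈ ℝ. Then α(0) = α₀, β(0) = β₀, and the curve (α(t), β(t)) satisfies the geodesic equations of the Fisher–Rao metric of the Pareto family: α''(t) − α'(t)²/α(t) + 2α'(t)β'(t)/β(t) = 0 and β''(t) − β(t)³α'(t)²/α(t)² − β'(t)²/β(t) = 0 for all t ∈ ℝ. -/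
open Real

/-- The curves `β(t) = β₀(eᵗ sin²(π/4 − θ₀/2) + e⁻ᵗ cos²(π/4 − θ₀/2))` and
`α(t) = α₀ exp(sinh t · cos θ₀ / β(t))` start at `(α₀, β₀)` and satisfy the
geodesic equations of the Fisher–Rao metric of the Pareto family:
`α'' − (α')²/α + 2α'β'/β = 0` and `β'' − β³(α')²/α² − (β')²/β = 0`. -/
theorem pareto_geodesic_equations (α₀ β₀ θ₀ : ℝ) (hα₀ : 0 < α₀) (hβ₀ : 0 < β₀)
    (A B : ℝ → ℝ)
    (hB : B = fun t => β₀ * (Real.exp t * Real.sin (π / 4 - θ₀ / 2) ^ 2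
      + Real.exp (-t) * Real.cos (π / 4 - θ₀ / 2) ^ 2))
    (hA : A = fun t => α₀ * Real.exp (Real.sinh t * Real.cos θ₀ / B t)) :
    A 0 = α₀ ∧ B 0 = β₀ ∧
    ∀ t : ℝ,
      deriv (deriv A) t - (deriv A t) ^ 2 / A t
        + 2 * deriv A t * deriv B t / B t = 0 ∧
      deriv (deriv B) t - (B t) ^ 3 * (deriv A t) ^ 2 / (A t) ^ 2
        - (deriv B t) ^ 2 / B t = 0 := by
  set s : ℝ := Real.sin (π / 4 - θ₀ / 2) ^ 2 with hs
  set c : ℝ := Real.cos (π / 4 - θ₀ / 2) ^ 2 with hc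
  have hs0 : 0 ≤ s := sq_nonneg _
  have hc0 : 0 ≤ c := sq_nonneg _
  have hsc : s + c = 1 := sin_sq_add_cos_sq _
  set K : ℝ := Real.cos θ₀ with hK
  -- 4 s c = K ^ 2
  have h4sc : 4 * s * c = K ^ 2 := by
    have h1 : Real.sin (2 * (π / 4 - θ₀ / 2)) =
        2 * Real.sin (π / 4 - θ₀ / 2) * Real.cos (π / 4 - θ₀ / 2) :=
      Real.sin_two_mul _
    have h2 : (2 : ℝ) * (π / 4 - θ₀ / 2) = π / 2 - θ₀ := by ring
    rw [h2, Real.sin_pi_div_two_sub] at h1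
    rw [hK, hs, hc]
    linear_combination (-(Real.cos θ₀ + 2 * Real.sin (π / 4 - θ₀ / 2) * Real.cos (π / 4 - θ₀ / 2))) * h1
  -- positivity of B
  have hBpos : ∀ t, 0 < B t := by
    intro t
    rw [hB]
    have he1 := Real.exp_pos t
    have he2 := Real.exp_pos (-t)
    have : 0 < Real.exp t * s + Real.exp (-t) * c := by
      rcases lt_or_eq_of_le hs0 with h | h
      · have := mul_pos he1 h
        nlinarith [mul_nonneg he2.le hc0]
      · have hc1 : c = 1 := by linarith
        rw [← h, hc1]; nlinarith
    positivity
  set Bd : ℝ → ℝ := fun t => β₀ * (Real.exp t * s - Real.exp (-t) * c) with hBdDef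
  have hBder : ∀ t, HasDerivAt B (Bd t) t := by
    intro t
    rw [hB]
    have h1 : HasDerivAt (fun t : ℝ => Real.exp t * s) (Real.exp t * s) t :=
      (Real.hasDerivAt_exp t).mul_const s
    have hneg : HasDerivAt (fun t : ℝ => -t) (-1 : ℝ) t := (hasDerivAt_id t).neg
    have h2 : HasDerivAt (fun t : ℝ => Real.exp (-t) * c)
        (Real.exp (-t) * (-1) * c) t :=
      ((Real.hasDerivAt_exp (-t)).comp t hneg).mul_const c
    have := (h1.add h2).const_mul β₀
    refine this.congr_deriv ?_
    rw [hBdDef]; ring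
  have hBdder : ∀ t, HasDerivAt Bd (B t) t := by
    intro t
    have h1 : HasDerivAt (fun t : ℝ => Real.exp t * s) (Real.exp t * s) t :=
      (Real.hasDerivAt_exp t).mul_const s
    have hneg : HasDerivAt (fun t : ℝ => -t) (-1 : ℝ) t := (hasDerivAt_id t).neg
    have h2 : HasDerivAt (fun t : ℝ => Real.exp (-t) * c)
        (Real.exp (-t) * (-1) * c) t :=
      ((Real.hasDerivAt_exp (-t)).comp t hneg).mul_const c
    have := (h1.sub h2).const_mul β₀
    refine this.congr_deriv ?_
    rw [hB]; ring
  have hderivB : deriv B = Bd := funext fun t => (hBder t).deriv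
  have hexpmul : ∀ t : ℝ, Real.exp t * Real.exp (-t) = 1 := by
    intro t; rw [← Real.exp_add]; simp
  -- cosh t * B t - sinh t * Bd t = β₀
  have hcb : ∀ t, Real.cosh t * B t - Real.sinh t * Bd t = β₀ := by
    intro t
    rw [hB, hBdDef, Real.cosh_eq, Real.sinh_eq]
    have h := hexpmul t
    simp only
    linear_combination β₀ * (Real.exp t * Real.exp (-t)) * hsc + β₀ * h
  -- B t ^ 2 - Bd t ^ 2 = (β₀ * K) ^ 2
  have hkey : ∀ t, B t ^ 2 - Bd t ^ 2 = (β₀ * K) ^ 2 := by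
    intro t
    rw [hB, hBdDef]
    have h := hexpmul t
    simp only
    linear_combination 4 * β₀ ^ 2 * s * c * h + β₀ ^ 2 * h4sc
  set g : ℝ → ℝ := fun t => Real.sinh t * K / B t with hg
  have hgder : ∀ t, HasDerivAt g (β₀ * K / B t ^ 2) t := by
    intro t
    have h := ((Real.hasDerivAt_sinh t).mul_const K).div (hBder t) (hBpos t).ne'
    refine h.congr_deriv (Eq.symm ?_)
    have hb := (hBpos t).ne'
    rw [div_eq_div_iff (by positivity) (by positivity)]
    have h := hcb t
    linear_combination (-K * B t ^ 2) * h
  have hAeq : ∀ t, A t = α₀ * Real.exp (g t) := by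
    intro t; rw [hA]
  have hAder : ∀ t, HasDerivAt A (A t * (β₀ * K / B t ^ 2)) t := by
    intro t
    have h := ((hgder t).exp).const_mul α₀
    rw [hA]
    refine h.congr_deriv ?_
    ring
  have hderivA : deriv A = fun t => A t * (β₀ * K / B t ^ 2) :=
    funext fun t => (hAder t).deriv
  -- second derivative of A
  have hAdd : ∀ t, deriv (deriv A) t
      = A t * (β₀ * K) ^ 2 / B t ^ 4 - 2 * A t * (β₀ * K) * Bd t / B t ^ 3 := by
    intro t
    rw [hderivA]
    have hb := (hBpos t).ne'
    have h2 : HasDerivAt (fun t => B t ^ 2) (2 * B t ^ 1 * Bd t) t := by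
      simpa using (hBder t).fun_pow 2
    have h3 : HasDerivAt (fun t => β₀ * K / B t ^ 2)
        ((0 * B t ^ 2 - β₀ * K * (2 * B t ^ 1 * Bd t)) / (B t ^ 2) ^ 2) t :=
      (hasDerivAt_const t (β₀ * K)).div h2 (by positivity)
    have h4 := (hAder t).fun_mul h3
    have := h4.deriv
    rw [this]
    field_simp
    ring
  -- second derivative of B
  have hBdd : ∀ t, deriv (deriv B) t = B t := by
    intro t
    rw [hderivB]
    exact (hBdder t).deriv
  have hApos : ∀ t, 0 < A t := by
    intro t; rw [hA]; positivity
  refine ⟨?_, ?_, ?_⟩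
  · rw [hA, hB]
    simp
  · rw [hB]
    simp only [Real.exp_zero, neg_zero, one_mul]
    linear_combination β₀ * hsc
  · intro t
    have ha := (hApos t).ne'
    have hb := (hBpos t).ne'
    have hA' : deriv A t = A t * (β₀ * K / B t ^ 2) := by rw [hderivA]
    have hB' : deriv B t = Bd t := by rw [hderivB]
    constructor
    · rw [hAdd t, hA', hB']
      field_simp
      ring
    · rw [hBdd t, hA', hB']
      have key := hkey t
      field_simp
      linear_combination key
end

section
/- Let α₀ > 0, β₀ > 0 and θ₀ ∈ ℝ. Define β(t) = β₀(e^t sin²(π/4 − θ₀/2) + e^{−t} cos²(π/4 − θ₀/2)) and α(t) = α₀ exp(sinh(t) cos(θ₀)/β(t)) for t ∈ ℝ. Then the curve (α(t), β(t)) has unit speed with respect to the Fisher–Rao metric of the Pareto family: (β(t)²/α(t)²) α'(t)² + β'(t)²/β(t)² = 1 for all t ∈ ℝ. -/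
open Real

/-- The geodesic curves `β(t) = β₀(eᵗ sin²(π/4 − θ₀/2) + e⁻ᵗ cos²(π/4 − θ₀/2))` and
`α(t) = α₀ exp(sinh t · cos θ₀ / β(t))` have unit speed with respect to the
Fisher–Rao metric of the Pareto family: `(β²/α²)(α')² + (β')²/β² = 1`. -/
theorem pareto_geodesic_unit_speed (α₀ β₀ θ₀ : ℝ) (hα₀ : 0 < α₀) (hβ₀ : 0 < β₀)
    (A B : ℝ → ℝ)
    (hB : B = fun t => β₀ * (Real.exp t * Real.sin (π / 4 - θ₀ / 2) ^ 2
      + Real.exp (-t) * Real.cos (π / 4 - θ₀ / 2) ^ 2))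
    (hA : A = fun t => α₀ * Real.exp (Real.sinh t * Real.cos θ₀ / B t)) :
    ∀ t : ℝ,
      (B t) ^ 2 / (A t) ^ 2 * (deriv A t) ^ 2 + (deriv B t) ^ 2 / (B t) ^ 2 = 1 := by
  intro t
  set φ : ℝ := π / 4 - θ₀ / 2 with hφ
  set s : ℝ := Real.sin φ with hs
  set c : ℝ := Real.cos φ with hc
  have hsc : s ^ 2 + c ^ 2 = 1 := Real.sin_sq_add_cos_sq φ
  have hee : Real.exp t * Real.exp (-t) = 1 := by
    rw [← Real.exp_add]; simp
  have h2sc : 2 * s * c = Real.cos θ₀ := by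
    rw [hs, hc, ← Real.sin_two_mul, hφ, show 2 * (π / 4 - θ₀ / 2) = π / 2 - θ₀ by ring,
      Real.sin_pi_div_two_sub]
  have hBt : B t = β₀ * (Real.exp t * s ^ 2 + Real.exp (-t) * c ^ 2) := by rw [hB]
  have hBpos : 0 < B t := by
    rw [hBt]
    have hpos : 0 < Real.exp t * s ^ 2 + Real.exp (-t) * c ^ 2 := by
      rcases eq_or_ne s 0 with h | h
      · have hc1 : c ^ 2 = 1 := by rw [h] at hsc; linarith
        rw [h, hc1]; simpa using Real.exp_pos (-t)
      · have h1 := Real.exp_pos t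
        have h2 := Real.exp_pos (-t)
        positivity
    exact mul_pos hβ₀ hpos
  have hBne : B t ≠ 0 := ne_of_gt hBpos
  have hBd : HasDerivAt B (β₀ * (Real.exp t * s ^ 2 - Real.exp (-t) * c ^ 2)) t := by
    rw [hB]
    have h1 : HasDerivAt (fun u : ℝ => Real.exp u * s ^ 2) (Real.exp t * s ^ 2) t :=
      (Real.hasDerivAt_exp t).mul_const _
    have h2 : HasDerivAt (fun u : ℝ => Real.exp (-u) * c ^ 2) (-Real.exp (-t) * c ^ 2) t := by
      have := ((Real.hasDerivAt_exp (-t)).comp t (hasDerivAt_neg t)).mul_const (c ^ 2)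
      exact this.congr_deriv (by ring)
    have := ((h1.add h2).const_mul β₀)
    exact this.congr_deriv (by ring)
  set Bd : ℝ := β₀ * (Real.exp t * s ^ 2 - Real.exp (-t) * c ^ 2) with hBdv
  have hf : HasDerivAt (fun u => Real.sinh u * Real.cos θ₀ / B u)
      ((Real.cosh t * Real.cos θ₀ * B t - Real.sinh t * Real.cos θ₀ * Bd) / (B t) ^ 2) t :=
    ((Real.hasDerivAt_sinh t).mul_const _).div hBd hBne
  have hAt : A t = α₀ * Real.exp (Real.sinh t * Real.cos θ₀ / B t) := by rw [hA]
  have hAd : HasDerivAt A (α₀ * (Real.exp (Real.sinh t * Real.cos θ₀ / B t)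
      * ((Real.cosh t * Real.cos θ₀ * B t - Real.sinh t * Real.cos θ₀ * Bd) / (B t) ^ 2))) t := by
    rw [hA]
    exact (hf.exp).const_mul α₀
  have hdA := hAd.deriv
  have hdB := hBd.deriv
  have key1 : Real.cosh t * B t - Real.sinh t * Bd = β₀ := by
    rw [hBt, hBdv, Real.cosh_eq, Real.sinh_eq]
    linear_combination (β₀ * Real.exp t * Real.exp (-t)) * hsc + β₀ * hee
  have key2 : (B t) ^ 2 - Bd ^ 2 = β₀ ^ 2 * Real.cos θ₀ ^ 2 := by
    rw [hBt, hBdv]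
    linear_combination (β₀ ^ 2 * 4 * s ^ 2 * c ^ 2) * hee
      + (β₀ ^ 2 * (2 * s * c + Real.cos θ₀)) * h2sc
  have hAne : A t ≠ 0 := by
    rw [hAt]; positivity
  have hN : Real.cosh t * Real.cos θ₀ * B t - Real.sinh t * Real.cos θ₀ * Bd
      = Real.cos θ₀ * β₀ := by linear_combination Real.cos θ₀ * key1
  have hfinal : β₀ ^ 2 * Real.cos θ₀ ^ 2 + Bd ^ 2 = (B t) ^ 2 := by linear_combination -key2
  have hexpne : Real.exp (Real.sinh t * Real.cos θ₀ / B t) ≠ 0 := Real.exp_ne_zero _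
  have hα₀ne : α₀ ≠ 0 := hα₀.ne'
  rw [hdA, hdB, hAt, hN]
  field_simp
  linear_combination hfinal
end

section
/- Let n ≥ 1 be an integer, x₁, …, xₙ > 0 with q₁ = min_i x_i, q₂ = Σ_i log x_i, λ := q₂ − n log q₁ > 0, and set the maximum likelihood estimates α̂ = q₁ and β̂ = n/λ. Then the posterior median of α is α̃ = α̂ · exp((1 − 2^{1/n})/β̂); that is, 0 < α̃ ≤ q₁ and ∫₀^{α̃} n² λⁿ / (α (q₂ − n log α)^{n+1}) dα = 1/2. -/
open MeasureTheory Real Set Filter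

/-- The posterior median of `α` under the Jeffreys prior for the Pareto model is
`α̃ = α̂ · exp((1 − 2^{1/n})/β̂)`, where `α̂ = q₁` and `β̂ = n/λ` are the MLEs:
namely `0 < α̃ ≤ q₁` and `∫₀^{α̃} n² λⁿ / (α (q₂ − n log α)^{n+1}) dα = 1/2`. -/
theorem pareto_posterior_median_alpha (n : ℕ) (hn : 1 ≤ n)
    (x : Fin n → ℝ) (hx : ∀ i, 0 < x i) (q₁ q₂ lam : ℝ)
    (hq₁ : q₁ = Finset.univ.inf' ⟨⟨0, hn⟩, Finset.mem_univ _⟩ x)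
    (hq₂ : q₂ = ∑ i, Real.log (x i))
    (hlam : lam = q₂ - n * Real.log q₁) (hlam_pos : 0 < lam)
    (ahat bhat atilde : ℝ) (hahat : ahat = q₁) (hbhat : bhat = n / lam)
    (hatilde : atilde = ahat * Real.exp ((1 - (2 : ℝ) ^ ((1 : ℝ) / n)) / bhat)) :
    0 < atilde ∧ atilde ≤ q₁ ∧
    (∫ α in (0 : ℝ)..atilde, n ^ 2 * lam ^ n / (α * (q₂ - n * Real.log α) ^ (n + 1)))
      = 1 / 2 := by
  have hn0 : (0:ℝ) < n := by exact_mod_cast hn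
  have hq₁pos : 0 < q₁ := by
    rw [hq₁]
    exact (Finset.lt_inf'_iff _).2 fun i _ => hx i
  set c : ℝ := (2:ℝ) ^ ((1:ℝ)/n) with hc
  have hc1 : 1 ≤ c := Real.one_le_rpow one_le_two (by positivity)
  have hcn : c ^ n = 2 := by
    rw [hc, ← Real.rpow_natCast ((2:ℝ) ^ ((1:ℝ)/n)) n, ← Real.rpow_mul (by norm_num)]
    rw [one_div, inv_mul_cancel₀ (ne_of_gt hn0), Real.rpow_one]
  have hbpos : 0 < bhat := by rw [hbhat]; positivity
  have hatilde_pos : 0 < atilde := by rw [hatilde, hahat]; positivity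
  have hatilde_le : atilde ≤ q₁ := by
    have h1 : (1 - c)/bhat ≤ 0 := div_nonpos_of_nonpos_of_nonneg (by linarith) hbpos.le
    have h2 : Real.exp ((1-c)/bhat) ≤ 1 := Real.exp_le_one_iff.2 h1
    rw [hatilde, hahat]
    nlinarith
  have hkey : q₂ - n * Real.log atilde = c * lam := by
    have hlog : Real.log atilde = Real.log q₁ + (1 - c) / bhat := by
      rw [hatilde, hahat, Real.log_mul (ne_of_gt hq₁pos) (Real.exp_ne_zero _), Real.log_exp]
    rw [hlog, hbhat]
    field_simp
    linarith [hlam]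
  refine ⟨hatilde_pos, hatilde_le, ?_⟩
  set g : ℝ → ℝ := fun α => if α ≤ 0 then 0 else lam ^ n / (q₂ - n * Real.log α) ^ n with hg
  set f : ℝ → ℝ := fun α => n ^ 2 * lam ^ n / (α * (q₂ - n * Real.log α) ^ (n + 1)) with hf
  have hupos : ∀ α : ℝ, 0 < α → α ≤ q₁ → 0 < q₂ - n * Real.log α := by
    intro α hα hαq
    have : Real.log α ≤ Real.log q₁ := Real.log_le_log hα hαq
    nlinarith [hlam]
  have hderiv : ∀ α ∈ Ioo (0:ℝ) atilde, HasDerivAt g (f α) α := by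
    intro α hα
    have hα0 : 0 < α := hα.1
    have hu : 0 < q₂ - n * Real.log α := hupos α hα0 (le_trans hα.2.le hatilde_le)
    have h1 : HasDerivAt (fun α : ℝ => q₂ - n * Real.log α) (-(n / α)) α := by
      have := ((Real.hasDerivAt_log (ne_of_gt hα0)).const_mul (n:ℝ)).const_sub q₂
      simpa [div_eq_mul_inv] using this
    have h2 : HasDerivAt (fun α : ℝ => (q₂ - n * Real.log α) ^ n)
        ((n : ℕ) * (q₂ - n * Real.log α) ^ (n - 1) * (-(n / α))) α := h1.pow n
    have h3 := (hasDerivAt_const α (lam ^ n)).div h2 (by positivity)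
    have heq : g =ᶠ[nhds α] fun α => lam ^ n / (q₂ - n * Real.log α) ^ n := by
      filter_upwards [eventually_gt_nhds hα0] with y hy
      simp [hg, not_le.2 hy]
    refine (HasDerivAt.congr_of_eventuallyEq ?_ heq)
    refine h3.congr_deriv ?_
    obtain ⟨m, rfl⟩ : ∃ m, n = m + 1 := ⟨n - 1, by omega⟩
    set u : ℝ := q₂ - (↑(m+1):ℝ) * Real.log α with hudef
    have hune : u ≠ 0 := ne_of_gt hu
    have hαne : α ≠ 0 := ne_of_gt hα0
    have hnum : (0 : ℝ) * u ^ (m+1) - lam ^ (m+1) * ((↑(m+1):ℝ) * u ^ (m+1-1) * (-((↑(m+1):ℝ) / α)))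
        = (↑(m+1):ℝ) ^ 2 * lam ^ (m+1) * u ^ m / α := by
      rw [Nat.add_sub_cancel]
      field_simp
      ring
    rw [hf]
    simp only
    rw [hnum, div_div, div_eq_div_iff (by positivity) (by positivity)]
    ring
  have hpos : ∀ α ∈ Ioo (0:ℝ) atilde, 0 ≤ f α := by
    intro α hα
    have hu : 0 < q₂ - n * Real.log α := hupos α hα.1 (le_trans hα.2.le hatilde_le)
    have := hα.1
    rw [hf]
    positivity
  have hg0 : g 0 = 0 := by simp [hg]
  have hcont : ContinuousOn g (Icc 0 atilde) := by
    intro α hα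
    rcases eq_or_lt_of_le hα.1 with h0 | h0
    · -- α = 0
      rw [← h0]
      rw [ContinuousWithinAt, hg0]
      have h1 : Tendsto (fun α : ℝ => q₂ - n * Real.log α) (nhdsWithin 0 (Ioi 0)) atTop := by
        have hlogt : Tendsto (fun α : ℝ => (n : ℝ) * Real.log α) (nhdsWithin 0 (Ioi 0)) atBot :=
          Real.tendsto_log_nhdsGT_zero.const_mul_atBot hn0
        have := (tendsto_neg_atBot_atTop.comp hlogt)
        simpa [sub_eq_add_neg] using tendsto_atTop_add_const_left _ q₂ this
      have h2 : Tendsto (fun α : ℝ => ((q₂ - n * Real.log α) ^ n)⁻¹)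
          (nhdsWithin 0 (Ioi 0)) (nhds 0) :=
        tendsto_inv_atTop_zero.comp ((tendsto_pow_atTop (by omega : n ≠ 0)).comp h1)
      have htend : Tendsto g (nhdsWithin 0 (Ioi 0)) (nhds 0) := by
        have h3 : Tendsto (fun α : ℝ => lam ^ n / (q₂ - n * Real.log α) ^ n)
            (nhdsWithin 0 (Ioi 0)) (nhds 0) := by
          simpa [div_eq_mul_inv] using h2.const_mul (lam ^ n)
        refine h3.congr' ?_
        filter_upwards [self_mem_nhdsWithin] with y hy
        simp [hg, not_le.2 (mem_Ioi.1 hy)]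
      have hle : nhdsWithin (0:ℝ) (Icc 0 atilde) ≤ nhdsWithin 0 (Ici 0) :=
        nhdsWithin_mono _ Icc_subset_Ici_self
      rw [← Set.Ioi_insert, nhdsWithin_insert] at hle
      refine Tendsto.mono_left ?_ hle
      rw [Filter.tendsto_sup]
      exact ⟨by simpa [hg0] using tendsto_pure_nhds g 0, htend⟩
    · -- α > 0
      have hu : 0 < q₂ - n * Real.log α := hupos α h0 (le_trans hα.2 hatilde_le)
      have hca : ContinuousAt (fun α : ℝ => lam ^ n / (q₂ - n * Real.log α) ^ n) α := by
        exact continuousAt_const.div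
          ((continuousAt_const.sub ((Real.continuousAt_log (ne_of_gt h0)).const_mul _)).pow n)
          (by positivity)
      have heq : g =ᶠ[nhds α] fun α => lam ^ n / (q₂ - n * Real.log α) ^ n := by
        filter_upwards [eventually_gt_nhds h0] with y hy
        simp [hg, not_le.2 hy]
      exact (hca.congr heq.symm).continuousWithinAt
  have hint : IntervalIntegrable f volume 0 atilde :=
    intervalIntegral.intervalIntegrable_deriv_of_nonneg
      (by rw [uIcc_of_le hatilde_pos.le]; exact hcont)
      (by rw [min_eq_left hatilde_pos.le, max_eq_right hatilde_pos.le]; exact hderiv)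
      (by rw [min_eq_left hatilde_pos.le, max_eq_right hatilde_pos.le]; exact hpos)
  have hftc := intervalIntegral.integral_eq_sub_of_hasDeriv_right_of_le hatilde_pos.le hcont
      (fun α hα => (hderiv α hα).hasDerivWithinAt) hint
  rw [hf] at hftc
  rw [hftc, hg0, sub_zero]
  have h1 : ¬ atilde ≤ 0 := not_le.2 hatilde_pos
  rw [hg]
  simp only [h1, if_false, hkey]
  rw [mul_pow, hcn, div_eq_iff (by positivity)]
  ring
end

section
/- Let n ≥ 2 be an integer and let α̂ > 0, β̂ > 0. Define the posterior mean ᾱ = α̂ − ∫₀^{α̂} (1 + β̂ log(α̂/t))^{−n} dt. Then ((n−1)β̂ − 1)/((n−1)β̂) · α̂ ≤ ᾱ ≤ (n β̂)/(n β̂ + 1) · α̂. -/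
open MeasureTheory Real
open Set

set_option maxHeartbeats 1000000

/-- Bounds for the posterior mean `ᾱ = α̂ − ∫₀^{α̂} (1 + β̂ log(α̂/t))^{−n} dt` of the
Pareto parameter `α` under the Jeffreys prior:
`((n−1)β̂ − 1)/((n−1)β̂) · α̂ ≤ ᾱ ≤ (nβ̂)/(nβ̂ + 1) · α̂`. -/
theorem pareto_posterior_mean_bounds (n : ℕ) (hn : 2 ≤ n)
    (ahat bhat abar : ℝ) (hahat : 0 < ahat) (hbhat : 0 < bhat)
    (habar : abar = ahat - ∫ t in (0 : ℝ)..ahat, 1 / (1 + bhat * Real.log (ahat / t)) ^ n) :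
    ((n - 1 : ℝ) * bhat - 1) / ((n - 1 : ℝ) * bhat) * ahat ≤ abar ∧
    abar ≤ (n * bhat) / (n * bhat + 1) * ahat := by
  obtain ⟨m, rfl⟩ : ∃ m, n = m + 2 := ⟨n - 2, by omega⟩
  set p : ℝ → ℝ := fun t => 1 + bhat * Real.log (ahat / t) with hpdef
  have hp0 : p 0 = 1 := by simp [hpdef]
  have hpa : p ahat = 1 := by simp [hpdef, div_self hahat.ne']
  have hp_ge : ∀ t ∈ Icc (0:ℝ) ahat, 1 ≤ p t := by
    intro t ht
    rcases eq_or_lt_of_le ht.1 with h | h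
    · rw [← h, hp0]
    · have h1 : 1 ≤ ahat / t := (one_le_div h).mpr ht.2
      have := Real.log_nonneg h1
      simp only [hpdef]; nlinarith
  have hp_pos : ∀ t ∈ Icc (0:ℝ) ahat, 0 < p t := fun t ht => lt_of_lt_of_le one_pos (hp_ge t ht)
  have hpm : Measurable p :=
    (Real.measurable_log.comp (measurable_const.div measurable_id)).const_mul bhat |>.const_add 1
  have hpcont : ∀ t : ℝ, 0 < t → ContinuousAt p t := by
    intro t ht
    have : ContinuousAt (fun x : ℝ => ahat / x) t := continuousAt_const.div continuousAt_id ht.ne'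
    exact (continuousAt_const.mul ((Real.continuousAt_log (by positivity)).comp this)).const_add 1
  -- derivative of p on Ioo
  have hpderiv : ∀ t ∈ Ioo (0:ℝ) ahat, HasDerivAt p (-(bhat / t)) t := by
    intro t ht
    have ht0 : t ≠ 0 := ne_of_gt ht.1
    have h1 : HasDerivAt (fun y : ℝ => ahat * y⁻¹) (ahat * (-(t^2)⁻¹)) t :=
      (hasDerivAt_inv ht0).const_mul ahat
    have hne : ahat * t⁻¹ ≠ 0 := by positivity
    have h2 := (h1.log hne).const_mul bhat |>.const_add 1
    have hpe : p = fun t => 1 + bhat * Real.log (ahat * t⁻¹) := by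
      funext x; simp [hpdef, div_eq_mul_inv]
    rw [hpe]
    refine h2.congr_deriv ?_
    field_simp
  -- f, F, F', G, G'
  set f : ℝ → ℝ := fun t => 1 / (p t) ^ (m + 2) with hfdef
  set F : ℝ → ℝ := fun t => t * ((p t) ^ (m + 1))⁻¹ with hFdef
  set F' : ℝ → ℝ := fun t => 1 / (p t) ^ (m + 1) + (m + 1) * bhat / (p t) ^ (m + 2) with hF'def
  set G : ℝ → ℝ := fun t => t * ((p t) ^ (m + 2))⁻¹ with hGdef
  set G' : ℝ → ℝ := fun t => 1 / (p t) ^ (m + 2) + (m + 2) * bhat / (p t) ^ (m + 3) with hG'def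
  -- generic continuity on Icc
  have hcontIcc : ∀ k : ℕ, ContinuousOn (fun t => t * ((p t) ^ k)⁻¹) (Icc 0 ahat) := by
    intro k t ht
    rcases eq_or_lt_of_le ht.1 with h | h
    · subst h
      have key : Filter.Tendsto (fun x => x * ((p x) ^ k)⁻¹) (nhdsWithin 0 (Icc 0 ahat)) (nhds 0) := by
        have hbd : ∀ᶠ x in nhdsWithin 0 (Icc 0 ahat), ‖x * ((p x) ^ k)⁻¹‖ ≤ x := by
          filter_upwards [eventually_mem_nhdsWithin] with x hx
          have h1 := hp_ge x hx
          have hpk : 1 ≤ (p x) ^ k := one_le_pow₀ h1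
          have hge : 0 ≤ x * ((p x) ^ k)⁻¹ :=
            mul_nonneg hx.1 (inv_nonneg.mpr (pow_nonneg (hp_pos x hx).le k))
          rw [Real.norm_eq_abs, abs_of_nonneg hge]
          calc x * ((p x) ^ k)⁻¹ ≤ x * 1 := by
                apply mul_le_mul_of_nonneg_left _ hx.1
                exact inv_le_one_of_one_le₀ hpk
            _ = x := by ring
        exact squeeze_zero_norm' hbd
          ((continuous_id.tendsto 0).mono_left nhdsWithin_le_nhds)
      simpa [ContinuousWithinAt] using key
    · apply ContinuousAt.continuousWithinAt
      have hpk : (p t) ^ k ≠ 0 := by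
        have := hp_pos t ht; positivity
      exact continuousAt_id.mul (((hpcont t h).pow k).inv₀ hpk)
  -- derivatives of F and G on Ioo
  have hderiv : ∀ k : ℕ, ∀ t ∈ Ioo (0:ℝ) ahat,
      HasDerivAt (fun t => t * ((p t) ^ (k+1))⁻¹)
        (1 / (p t) ^ (k + 1) + (k + 1) * bhat / (p t) ^ (k + 2)) t := by
    intro k t ht
    have htpos := ht.1
    have hpt : 0 < p t := hp_pos t ⟨le_of_lt ht.1, le_of_lt ht.2⟩
    have hpk : (p t) ^ (k+1) ≠ 0 := by positivity
    have h1 : HasDerivAt (fun t => (p t) ^ (k+1))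
        ((k+1) * (p t) ^ k * (-(bhat / t))) t := by
      have := (hpderiv t ht).pow (k+1)
      exact this.congr_deriv (by rw [Nat.add_sub_cancel]; push_cast; ring)
    have h2 := h1.inv hpk
    have h3 := (hasDerivAt_id t).mul h2
    refine h3.congr_deriv ?_
    have ht0 : t ≠ 0 := ne_of_gt htpos
    simp only [Pi.inv_apply, id_eq]
    field_simp
    ring
  have hFderiv : ∀ t ∈ Ioo (0:ℝ) ahat, HasDerivAt F (F' t) t := fun t ht => hderiv m t ht
  have hGderiv : ∀ t ∈ Ioo (0:ℝ) ahat, HasDerivAt G (G' t) t := by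
    intro t ht
    have h := hderiv (m+1) t ht
    convert h using 1
    show G' t = _
    rw [hG'def]
    push_cast
    ring
  -- integrability helper
  have hint : ∀ (g : ℝ → ℝ) (C : ℝ), Measurable g → (∀ t ∈ Ioc (0:ℝ) ahat, ‖g t‖ ≤ C) →
      IntervalIntegrable g volume 0 ahat := by
    intro g C hm hb
    rw [intervalIntegrable_iff_integrableOn_Ioc_of_le hahat.le]
    apply Measure.integrableOn_of_bounded (M := C) (by simp) hm.aestronglyMeasurable
    filter_upwards [ae_restrict_mem measurableSet_Ioc] with x hx using hb x hx
  have hfm : Measurable f := by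
    apply Measurable.div measurable_const (hpm.pow_const _)
  have hF'm : Measurable F' :=
    (Measurable.div measurable_const (hpm.pow_const _)).add
      (Measurable.div measurable_const (hpm.pow_const _))
  have hG'm : Measurable G' :=
    (Measurable.div measurable_const (hpm.pow_const _)).add
      (Measurable.div measurable_const (hpm.pow_const _))
  have key_bound : ∀ (k : ℕ) (t : ℝ), t ∈ Icc (0:ℝ) ahat → 0 < (p t)^k ∧ (p t)^k ≤ (p t)^(k+1) ∧ 1 ≤ (p t)^k := by
    intro k t ht
    have h1 := hp_ge t ht
    have h2 : 0 < p t := lt_of_lt_of_le one_pos h1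
    refine ⟨by positivity, ?_, one_le_pow₀ h1⟩
    calc (p t)^k = (p t)^k * 1 := by ring
      _ ≤ (p t)^k * p t := by nlinarith [pow_pos h2 k]
      _ = (p t)^(k+1) := by ring
  have hfint : IntervalIntegrable f volume 0 ahat := by
    apply hint f 1 hfm
    intro t ht
    obtain ⟨h1, _, h3⟩ := key_bound (m+2) t ⟨le_of_lt ht.1, ht.2⟩
    rw [hfdef]
    simp only [Real.norm_eq_abs]
    rw [abs_of_nonneg (by positivity)]
    rw [div_le_one h1]; exact h3
  have hF'int : IntervalIntegrable F' volume 0 ahat := by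
    apply hint F' (1 + (m+1)*bhat) hF'm
    intro t ht
    obtain ⟨h1, _, h3⟩ := key_bound (m+1) t ⟨le_of_lt ht.1, ht.2⟩
    obtain ⟨h1', _, h3'⟩ := key_bound (m+2) t ⟨le_of_lt ht.1, ht.2⟩
    rw [hF'def]
    simp only [Real.norm_eq_abs]
    have e1 : 1 / (p t)^(m+1) ≤ 1 := by rw [div_le_one h1]; exact h3
    have e2 : ((m:ℝ)+1) * bhat / (p t)^(m+2) ≤ (m+1)*bhat := by
      rw [div_le_iff₀ h1']
      nlinarith [mul_pos (by positivity : (0:ℝ) < (m:ℝ)+1) hbhat]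
    rw [abs_of_nonneg (by positivity)]
    push_cast
    linarith
  have hG'int : IntervalIntegrable G' volume 0 ahat := by
    apply hint G' (1 + (m+2)*bhat) hG'm
    intro t ht
    obtain ⟨h1, _, h3⟩ := key_bound (m+2) t ⟨le_of_lt ht.1, ht.2⟩
    obtain ⟨h1', _, h3'⟩ := key_bound (m+3) t ⟨le_of_lt ht.1, ht.2⟩
    rw [hG'def]
    simp only [Real.norm_eq_abs]
    have e1 : 1 / (p t)^(m+2) ≤ 1 := by rw [div_le_one h1]; exact h3
    have e2 : ((m:ℝ)+2) * bhat / (p t)^(m+3) ≤ (m+2)*bhat := by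
      rw [div_le_iff₀ h1']
      nlinarith [mul_pos (by positivity : (0:ℝ) < (m:ℝ)+2) hbhat]
    rw [abs_of_nonneg (by positivity)]
    push_cast
    linarith
  -- FTC
  have hFcont : ContinuousOn F (Icc 0 ahat) := by rw [hFdef]; exact hcontIcc (m+1)
  have hGcont : ContinuousOn G (Icc 0 ahat) := by rw [hGdef]; exact hcontIcc (m+2)
  have hFTC_F : ∫ t in (0:ℝ)..ahat, F' t = ahat := by
    have h := intervalIntegral.integral_eq_sub_of_hasDeriv_right_of_le hahat.le
      hFcont (fun t ht => ((hFderiv t ht).hasDerivWithinAt)) hF'int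
    rw [h, hFdef]
    simp [hpa, hp0]
  have hFTC_G : ∫ t in (0:ℝ)..ahat, G' t = ahat := by
    have h := intervalIntegral.integral_eq_sub_of_hasDeriv_right_of_le hahat.le
      hGcont (fun t ht => ((hGderiv t ht).hasDerivWithinAt)) hG'int
    rw [h, hGdef]
    simp [hpa, hp0]
  -- pointwise comparisons on Icc
  have c1pos : (0:ℝ) < ((m:ℝ)+1) * bhat := by positivity
  have c2pos : (0:ℝ) < ((m:ℝ)+2) * bhat + 1 := by positivity
  have hcomp1 : ∀ t ∈ Icc (0:ℝ) ahat, f t ≤ F' t / (((m:ℝ)+1) * bhat) := by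
    intro t ht
    obtain ⟨h1, _, _⟩ := key_bound (m+1) t ht
    rw [le_div_iff₀ c1pos]
    simp only [hfdef, hF'def]
    have h0 : (0:ℝ) ≤ 1 / (p t)^(m+1) := by positivity
    have hrw : 1 / (p t)^(m+2) * (((m:ℝ)+1) * bhat) = ((m:ℝ)+1) * bhat / (p t)^(m+2) := by ring
    rw [hrw]
    linarith
  have hcomp2 : ∀ t ∈ Icc (0:ℝ) ahat, G' t / (((m:ℝ)+2) * bhat + 1) ≤ f t := by
    intro t ht
    obtain ⟨h1, h2, _⟩ := key_bound (m+2) t ht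
    rw [div_le_iff₀ c2pos]
    simp only [hfdef, hG'def]
    have hinvle : ((m:ℝ)+2)*bhat / (p t)^(m+3) ≤ ((m:ℝ)+2)*bhat / (p t)^(m+2) := by
      apply div_le_div_of_nonneg_left (by positivity) (by positivity) h2
    have hrhs : 1/(p t)^(m+2) * (((m:ℝ)+2)*bhat + 1)
        = 1/(p t)^(m+2) + ((m:ℝ)+2)*bhat/(p t)^(m+2) := by ring
    rw [hrhs]
    linarith
  -- integral bounds
  set I := ∫ t in (0:ℝ)..ahat, f t with hIdef
  have hIhi : I ≤ ahat / (((m:ℝ)+1) * bhat) := by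
    have h := intervalIntegral.integral_mono_on hahat.le hfint (hF'int.div_const _) hcomp1
    rw [hIdef]
    calc (∫ t in (0:ℝ)..ahat, f t) ≤ ∫ t in (0:ℝ)..ahat, F' t / (((m:ℝ)+1) * bhat) := h
      _ = (∫ t in (0:ℝ)..ahat, F' t) / (((m:ℝ)+1) * bhat) := intervalIntegral.integral_div _ _
      _ = ahat / (((m:ℝ)+1) * bhat) := by rw [hFTC_F]
  have hIlo : ahat / (((m:ℝ)+2) * bhat + 1) ≤ I := by
    have h := intervalIntegral.integral_mono_on hahat.le (hG'int.div_const _) hfint hcomp2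
    rw [hIdef]
    calc ahat / (((m:ℝ)+2) * bhat + 1)
        = (∫ t in (0:ℝ)..ahat, G' t) / (((m:ℝ)+2) * bhat + 1) := by rw [hFTC_G]
      _ = ∫ t in (0:ℝ)..ahat, G' t / (((m:ℝ)+2) * bhat + 1) :=
          (intervalIntegral.integral_div _ _).symm
      _ ≤ ∫ t in (0:ℝ)..ahat, f t := h
  -- conclude
  have habar' : abar = ahat - I := habar
  constructor
  · rw [habar']
    have : ((((m:ℕ)+2:ℕ):ℝ) - 1) * bhat = ((m:ℝ)+1) * bhat := by push_cast; ring
    rw [this]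
    have heq : (((m:ℝ)+1) * bhat - 1) / (((m:ℝ)+1) * bhat) * ahat
        = ahat - ahat / (((m:ℝ)+1) * bhat) := by
      field_simp
    rw [heq]
    linarith
  · rw [habar']
    have : (((m:ℕ)+2:ℕ):ℝ) * bhat = ((m:ℝ)+2) * bhat := by push_cast; ring
    rw [this]
    have heq : ((m:ℝ)+2) * bhat / (((m:ℝ)+2) * bhat + 1) * ahat
        = ahat - ahat / (((m:ℝ)+2) * bhat + 1) := by
      field_simp
      ring
    rw [heq]
    linarith
end

section
/- Let n ≥ 1 be an integer, x₁, …, xₙ > 0 with q₁ = min_i x_i, q₂ = Σ_i log x_i, λ := q₂ − n log q₁ > 0. Then for every x̃ > 0, the posterior predictive density under the Jeffreys prior satisfies ∫₀^∞ ∫₀^∞ p(x̃ | α, β) · p(α, β | x) dα dβ = n² λⁿ / ((n+1) x̃ (q₂ + log x̃ − (n+1) log(min(x̃, q₁)))^{n+1}), where p(x̃ | α, β) = β α^β x̃^{−(β+1)} for x̃ ≥ α and 0 otherwise. -/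
open MeasureTheory Real

/-- Posterior predictive density of a new observation `x̃` for the Pareto model
under the Jeffreys prior:
`∫₀^∞ ∫₀^∞ p(x̃ | α, β) p(α, β | x) dα dβ`
`= n² λⁿ / ((n+1) x̃ (q₂ + log x̃ − (n+1) log(min x̃ q₁))^{n+1})`, where
`p(x̃ | α, β) = β α^β x̃^{−(β+1)}` for `x̃ ≥ α` and `0` otherwise, and
`p(α, β | x) = (n λⁿ / Γ(n)) βⁿ α^{nβ−1} e^{−q₂β}` for `0 < α ≤ q₁` and `0` otherwise. -/
theorem pareto_posterior_predictive (n : ℕ) (hn : 1 ≤ n)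
    (x : Fin n → ℝ) (hx : ∀ i, 0 < x i) (q₁ q₂ lam : ℝ)
    (hq₁ : q₁ = Finset.univ.inf' ⟨⟨0, hn⟩, Finset.mem_univ _⟩ x)
    (hq₂ : q₂ = ∑ i, Real.log (x i))
    (hlam : lam = q₂ - n * Real.log q₁) (hlam_pos : 0 < lam) :
    ∀ xt : ℝ, 0 < xt →
      (∫ β in Set.Ioi (0 : ℝ), ∫ α in Set.Ioi (0 : ℝ),
          (if α ≤ xt then β * α ^ β * xt ^ (-(β + 1)) else 0) *
          (if α ≤ q₁ then
            (n * lam ^ n / Real.Gamma n) * β ^ n * α ^ ((n : ℝ) * β - 1) * Real.exp (-q₂ * β)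
           else 0))
        = n ^ 2 * lam ^ n /
            ((n + 1) * xt * (q₂ + Real.log xt - (n + 1) * Real.log (min xt q₁)) ^ (n + 1)) := by
  intro xt hxt
  have hq₁pos : 0 < q₁ := by
    obtain ⟨i, -, hi⟩ := Finset.exists_mem_eq_inf'
      (⟨⟨0, hn⟩, Finset.mem_univ _⟩ : (Finset.univ : Finset (Fin n)).Nonempty) x
    rw [hq₁, hi]; exact hx i
  set C : ℝ := (n : ℝ) * lam ^ n / Real.Gamma n with hC
  set m : ℝ := min xt q₁ with hm
  have hmpos : 0 < m := lt_min hxt hq₁pos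
  set μ : ℝ := q₂ + Real.log xt - ((n : ℝ) + 1) * Real.log m with hμ
  have hnpos : (0 : ℝ) < n := by exact_mod_cast hn
  have hμpos : 0 < μ := by
    rcases le_total xt q₁ with h | h
    · have hmm : m = xt := min_eq_left h
      have hlog : Real.log xt ≤ Real.log q₁ := Real.log_le_log hxt h
      have : lam ≤ μ := by
        rw [hμ, hmm, hlam]; nlinarith
      linarith
    · have hmm : m = q₁ := min_eq_right h
      have hlog : Real.log q₁ ≤ Real.log xt := Real.log_le_log hq₁pos h
      have : lam ≤ μ := by
        rw [hμ, hmm, hlam]; nlinarith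
      linarith
  have hμne : μ ≠ 0 := ne_of_gt hμpos
  set D : ℝ := C * xt⁻¹ / ((n : ℝ) + 1) with hD
  have inner : ∀ β ∈ Set.Ioi (0 : ℝ),
      (∫ α in Set.Ioi (0 : ℝ),
          (if α ≤ xt then β * α ^ β * xt ^ (-(β + 1)) else 0) *
          (if α ≤ q₁ then C * β ^ n * α ^ ((n : ℝ) * β - 1) * Real.exp (-q₂ * β) else 0))
        = D * (β ^ (((n : ℝ) + 1) - 1) * Real.exp (-(μ * β))) := by
    intro β hβ
    have hβ0 : (0 : ℝ) < β := hβ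
    set p : ℝ := ((n : ℝ) + 1) * β with hp
    have hppos : 0 < p := by positivity
    have hpne : p ≠ 0 := ne_of_gt hppos
    set K : ℝ := β * xt ^ (-(β + 1)) * (C * β ^ n * Real.exp (-q₂ * β)) with hK
    have step1 : Set.EqOn
        (fun α : ℝ => (if α ≤ xt then β * α ^ β * xt ^ (-(β + 1)) else 0) *
          (if α ≤ q₁ then C * β ^ n * α ^ ((n : ℝ) * β - 1) * Real.exp (-q₂ * β) else 0))
        (Set.indicator (Set.Ioc 0 m) (fun α => K * α ^ (p - 1)))
        (Set.Ioi (0 : ℝ)) := by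
      intro α hα
      have hα0 : (0 : ℝ) < α := hα
      by_cases h1 : α ≤ m
      · have hx1 : α ≤ xt := le_trans h1 (min_le_left _ _)
        have hx2 : α ≤ q₁ := le_trans h1 (min_le_right _ _)
        have hpow : α ^ β * α ^ ((n : ℝ) * β - 1) = α ^ (p - 1) := by
          rw [← Real.rpow_add hα0]; congr 1; rw [hp]; ring
        have hmem : α ∈ Set.Ioc (0:ℝ) m := ⟨hα0, h1⟩
        simp only [Set.indicator_of_mem hmem, if_pos hx1, if_pos hx2, hK]
        calc (β * α ^ β * xt ^ (-(β + 1))) *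
              (C * β ^ n * α ^ ((n : ℝ) * β - 1) * Real.exp (-q₂ * β))
            = β * xt ^ (-(β + 1)) * (C * β ^ n * Real.exp (-q₂ * β)) *
              (α ^ β * α ^ ((n : ℝ) * β - 1)) := by ring
          _ = β * xt ^ (-(β + 1)) * (C * β ^ n * Real.exp (-q₂ * β)) * α ^ (p - 1) := by
              rw [hpow]
      · have hα_not : α ∉ Set.Ioc (0 : ℝ) m := fun hmem => h1 hmem.2
        rw [Set.indicator_of_notMem hα_not]
        push_neg at h1
        rcases min_lt_iff.mp h1 with h | h
        · simp [not_le.mpr h]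
        · simp [not_le.mpr h]
    rw [setIntegral_congr_fun measurableSet_Ioi step1,
      setIntegral_indicator measurableSet_Ioc,
      Set.inter_eq_self_of_subset_right Set.Ioc_subset_Ioi_self,
      integral_const_mul,
      ← intervalIntegral.integral_of_le hmpos.le,
      integral_rpow (Or.inl (by linarith : (-1 : ℝ) < p - 1))]
    have h0p : (0 : ℝ) ^ (p - 1 + 1) = 0 := by
      rw [sub_add_cancel]; exact Real.zero_rpow hpne
    rw [h0p, sub_add_cancel, sub_zero]
    -- now: K * (m ^ p / p) = D * (β ^ ((n+1)-1) * exp (-(μ*β)))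
    have key : xt ^ (-(β + 1)) * Real.exp (-q₂ * β) * m ^ p
        = xt⁻¹ * Real.exp (-(μ * β)) := by
      rw [Real.rpow_def_of_pos hxt, Real.rpow_def_of_pos hmpos,
        show xt⁻¹ = Real.exp (-Real.log xt) by rw [Real.exp_neg, Real.exp_log hxt],
        ← Real.exp_add, ← Real.exp_add, ← Real.exp_add]
      congr 1
      rw [hμ, hp]; ring
    have hrn : β ^ (((n : ℝ) + 1) - 1) = β ^ n := by
      rw [show ((n : ℝ) + 1) - 1 = (n : ℝ) by ring, Real.rpow_natCast]
    rw [hrn]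
    calc K * (m ^ p / p)
        = (β / p) * (C * β ^ n) * (xt ^ (-(β + 1)) * Real.exp (-q₂ * β) * m ^ p) := by
          rw [hK]; field_simp
      _ = (β / p) * (C * β ^ n) * (xt⁻¹ * Real.exp (-(μ * β))) := by rw [key]
      _ = D * (β ^ n * Real.exp (-(μ * β))) := by
          rw [hD, hp]; field_simp
  rw [setIntegral_congr_fun measurableSet_Ioi inner,
    integral_const_mul,
    integral_rpow_mul_exp_neg_mul_Ioi (by positivity : (0 : ℝ) < (n : ℝ) + 1) hμpos,
    Real.Gamma_add_one (ne_of_gt hnpos),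
    show ((n : ℝ) + 1) = ((n + 1 : ℕ) : ℝ) by push_cast; ring,
    Real.rpow_natCast]
  have hΓ : (0 : ℝ) < Real.Gamma n := Real.Gamma_pos_of_pos hnpos
  rw [hD, hC]
  have hμn : μ ^ (n + 1) ≠ 0 := pow_ne_zero _ hμne
  field_simp
  ring
  push_cast
  field_simp
  rw [← mul_pow, mul_one_div_cancel hμne, one_pow]
end
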